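/- Let (Y,d_Y) be a path metric space and suppose (Z,d_Z) is a retract of Y in the nonexpansive sense: there are nonexpansive maps h : Z → Y and π : Y → Z with π ∘ h = id_Z. Then (Z,d_Z) is a path metric space. -/

import Mathlib

open ENNReal NNReal

/-- The intrinsic (length) extended distance associated to an extended metric:
the infimum of lengths `ℓ` of `1`-Lipschitz curves `[0, ℓ] → X` joining the two points. -/
noncomputable def intrinsicEDist {X : Type*} [EMetricSpace X] (x x' : X) : ℝ≥0∞ :=
  sInf {L : ℝ≥0∞ | ∃ ℓ : ℝ≥0, L = (ℓ : ℝ≥0∞) ∧ ∃ φ : ℝ → X,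
    LipschitzOnWith 1 φ (Set.Icc 0 (ℓ : ℝ)) ∧ φ 0 = x ∧ φ (ℓ : ℝ) = x'}

theorem edist_le_intrinsicEDist {X : Type*} [EMetricSpace X] (x x' : X) :
    edist x x' ≤ intrinsicEDist x x' := by
  refine le_sInf ?_
  rintro _ ⟨ℓ, rfl, φ, hφ, rfl, rfl⟩
  have hℓ : (ℓ : ℝ) ∈ Set.Icc 0 (ℓ : ℝ) := ⟨ℓ.coe_nonneg, le_rfl⟩
  calc edist (φ 0) (φ ℓ) ≤ 1 * edist (0 : ℝ) ℓ := hφ (Set.left_mem_Icc.2 ℓ.coe_nonneg) hℓ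
    _ = ℓ := by simp [edist_dist]

theorem LipschitzWith.intrinsicEDist_le {X Y : Type*} [EMetricSpace X] [EMetricSpace Y]
    {f : X → Y} (hf : LipschitzWith 1 f) (x x' : X) :
    intrinsicEDist (f x) (f x') ≤ intrinsicEDist x x' := by
  refine sInf_le_sInf ?_
  rintro _ ⟨ℓ, rfl, φ, hφ, rfl, rfl⟩
  exact ⟨ℓ, rfl, f ∘ φ, by simpa using hf.comp_lipschitzOnWith hφ, rfl, rfl⟩

/-- A nonexpansive retract of a path metric space is a path metric space. -/
theorem retract_path_metric {Y Z : Type*} [EMetricSpace Y] [EMetricSpace Z]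
    (hY : ∀ y y' : Y, edist y y' = intrinsicEDist y y')
    (h : Z → Y) (π : Y → Z)
    (hh : LipschitzWith 1 h) (hπ : LipschitzWith 1 π)
    (hretr : π ∘ h = id) :
    ∀ z z' : Z, edist z z' = intrinsicEDist z z' := by
  intro z z'
  have hπh (w : Z) : π (h w) = w := congrFun hretr w
  refine le_antisymm (edist_le_intrinsicEDist z z') ?_
  calc intrinsicEDist z z' = intrinsicEDist (π (h z)) (π (h z')) := by rw [hπh, hπh]
    _ ≤ intrinsicEDist (h z) (h z') := hπ.intrinsicEDist_le _ _
    _ = edist (h z) (h z') := (hY _ _).symm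
    _ ≤ edist z z' := by simpa using hh.edist_le_mul z z'
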